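/- Asymptotic completeness for the model system, single-mode version (Proposition 3.13 of the paper): let λ ≥ 0 and let (a, c) solve the mode-λ model system on the interval (0, 1], with a twice continuously differentiable and c continuously differentiable on (0,1]. Then c extends continuously to τ = 0 and there exist real numbers O, h and a constant K ≥ 0 such that |a(τ) − O·log τ − h| ≤ K·τ²·(1 + (log τ)²) and |a'(τ) − O/τ| ≤ K·τ·(1 + (log τ)²) for all τ ∈ (0, 1]; that is, (a, c) has asymptotic data (c(0), O, h) at τ = 0. -/

import Mathlib

/-!
With `w = τ a'`, multiplying (E) by `τ` gives `w' = τ G` where `|G| ≤ K (|w| + |a| + |c|)`.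
Since `a' = w / τ` and `c' = 2 τ a`, the weighted quantity `|w| + τ |a| + |c|` satisfies a
backward integral inequality on `(0, 1]`, and Gronwall bounds it. Hence `w` and `c` are bounded
and `|a| ≲ 1 - log τ`; feeding this back, `|w'|` and `|c'|` are `≲ τ (1 - log τ)`, which is
integrable at `0`. So `w → O` and `c → c₀`, and then `a - O log τ → h`, each with error at most
a multiple of `∫₀^τ s (1 - log s) ds = τ² (3/4 - log τ / 2) ≤ (5/4) τ² (1 + log² τ)`.
-/

open Set Filter

/-- The pair `(a, c)` solves the mode-`lam` model system on `I ⊆ (0,∞)`: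
`a` is twice differentiable and `c` is differentiable on `I`, and for all `τ ∈ I`,
(E) `a'' + τ⁻¹·a' + 4q'·a + 4λ²·(τ²+1)⁻²·a = f₁·τ·a' + f₂·τ²·a + f₃·c` and
(C) `c' = 2τ·a`. -/
def SolvesModelSystem (q' : ℝ) (f₁ f₂ f₃ : ℝ → ℝ) (lam : ℝ)
    (a c : ℝ → ℝ) (I : Set ℝ) : Prop :=
  ∀ τ ∈ I,
    DifferentiableAt ℝ a τ ∧ DifferentiableAt ℝ (deriv a) τ ∧ DifferentiableAt ℝ c τ ∧
    (deriv (deriv a) τ + τ⁻¹ * deriv a τ + 4 * q' * a τ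
        + 4 * lam ^ 2 * ((τ ^ 2 + 1) ^ 2)⁻¹ * a τ
      = f₁ τ * τ * deriv a τ + f₂ τ * τ ^ 2 * a τ + f₃ τ * c τ) ∧
    deriv c τ = 2 * τ * a τ

/-- The pair `(a, c)` (solving the model system on `(0,∞)`, with `c` extended
continuously to `[0,∞)`) has asymptotic data `(c₀, O, h)` at `τ = 0`. -/
def HasAsymptoticData (a c : ℝ → ℝ) (c₀ O h : ℝ) : Prop :=
  ContinuousOn c (Ici 0) ∧ c 0 = c₀ ∧
  ∃ K : ℝ, 0 ≤ K ∧ ∀ τ ∈ Ioc (0:ℝ) 1,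
    |a τ - O * Real.log τ - h| ≤ K * τ ^ 2 * (1 + Real.log τ ^ 2) ∧
    |deriv a τ - O / τ| ≤ K * τ * (1 + Real.log τ ^ 2)

open MeasureTheory intervalIntegral Topology

noncomputable def logWeight (s : ℝ) : ℝ := s * (1 - Real.log s)

noncomputable def logWeightPrimitive (t : ℝ) : ℝ := t ^ 2 * (3 / 4 - Real.log t / 2)

theorem continuous_logWeight : Continuous logWeight := by
  have : logWeight = fun s => s - s * Real.log s := by
    funext s
    simp only [logWeight]
    ring
  rw [this]
  exact continuous_id.sub Real.continuous_mul_log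

theorem continuous_logWeightPrimitive : Continuous logWeightPrimitive := by
  have : logWeightPrimitive = fun t => 3 / 4 * t ^ 2 - t * (t * Real.log t) / 2 := by
    funext t
    simp only [logWeightPrimitive]
    ring
  rw [this]
  exact ((continuous_pow 2).const_mul _).sub
    ((continuous_id.mul Real.continuous_mul_log).div_const 2)

theorem hasDerivAt_logWeightPrimitive {t : ℝ} (ht : t ≠ 0) :
    HasDerivAt logWeightPrimitive (logWeight t) t := by
  have h := (hasDerivAt_pow 2 t).mul (((Real.hasDerivAt_log ht).div_const 2).const_sub (3 / 4))
  refine h.congr_deriv ?_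
  simp only [logWeight]
  field_simp
  ring

theorem integral_logWeight {t : ℝ} (ht : 0 ≤ t) :
    ∫ s in 0..t, logWeight s = logWeightPrimitive t := by
  rw [integral_eq_sub_of_hasDerivAt_of_le ht continuous_logWeightPrimitive.continuousOn
    (fun s hs => hasDerivAt_logWeightPrimitive hs.1.ne')
    (continuous_logWeight.intervalIntegrable 0 t)]
  simp [logWeightPrimitive]

theorem tendsto_logWeightPrimitive_nhdsGT_zero :
    Tendsto logWeightPrimitive (𝓝[>] 0) (𝓝 0) := by
  have h := continuous_logWeightPrimitive.tendsto 0
  rw [show logWeightPrimitive 0 = 0 by simp [logWeightPrimitive]] at h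
  exact h.mono_left nhdsWithin_le_nhds

theorem logWeightPrimitive_le_mul_logWeight {t : ℝ} (h0 : 0 ≤ t) (h1 : t ≤ 1) :
    logWeightPrimitive t ≤ t * logWeight t := by
  have := Real.log_nonpos h0 h1
  simp only [logWeightPrimitive, logWeight]
  nlinarith [mul_nonneg (sq_nonneg t) (neg_nonneg.2 this)]

theorem logWeightPrimitive_le (t : ℝ) :
    logWeightPrimitive t ≤ 5 / 4 * t ^ 2 * (1 + Real.log t ^ 2) := by
  simp only [logWeightPrimitive]
  nlinarith [mul_nonneg (sq_nonneg t) (sq_nonneg (Real.log t + 1 / 5))]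

theorem abs_le_abs_add_integral_of_abs_deriv_le {f f' g : ℝ → ℝ} {τ b : ℝ} (hτb : τ ≤ b)
    (hderiv : ∀ s ∈ Icc τ b, HasDerivAt f (f' s) s) (hf' : ContinuousOn f' (Icc τ b))
    (hg : IntervalIntegrable g volume τ b) (hle : ∀ s ∈ Icc τ b, |f' s| ≤ g s) :
    |f τ| ≤ |f b| + ∫ s in τ..b, g s := by
  have hftc : ∫ s in τ..b, f' s = f b - f τ :=
    integral_eq_sub_of_hasDerivAt (by rwa [uIcc_of_le hτb])
      (hf'.intervalIntegrable_of_Icc hτb)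
  have hnorm : |∫ s in τ..b, f' s| ≤ ∫ s in τ..b, g s := by
    simpa only [Real.norm_eq_abs] using
      norm_integral_le_of_norm_le (f := f') hτb
        (ae_of_all _ fun s hs => hle s (Ioc_subset_Icc_self hs)) hg
  calc |f τ| = |f b - (f b - f τ)| := by ring_nf
    _ ≤ |f b| + |f b - f τ| := abs_sub _ _
    _ ≤ |f b| + ∫ s in τ..b, g s := by rw [← hftc]; gcongr

theorem exists_abs_sub_le_integral_of_abs_deriv_le {f f' g : ℝ → ℝ} {a b : ℝ}
    (hderiv : ∀ s ∈ Ioc a b, HasDerivAt f (f' s) s) (hf' : ContinuousOn f' (Ioc a b))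
    (hg : IntervalIntegrable g volume a b) (hle : ∀ s ∈ Ioc a b, |f' s| ≤ g s) :
    ∃ L, ∀ τ ∈ Ioc a b, |f τ - L| ≤ ∫ s in a..τ, g s := by
  refine ⟨f b - ∫ s in a..b, f' s, fun τ hτ => ?_⟩
  have hab : a ≤ b := hτ.1.le.trans hτ.2
  have hint : IntervalIntegrable f' volume a b := by
    refine hg.mono_fun' ?_ ?_ <;> rw [uIoc_of_le hab]
    · exact hf'.aestronglyMeasurable measurableSet_Ioc
    · exact (ae_restrict_iff' measurableSet_Ioc).2 (ae_of_all _ hle)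
  have hsub : uIcc τ b ⊆ uIcc a b := uIcc_subset_uIcc_right (mem_uIcc_of_le hτ.1.le hτ.2)
  have hftc : ∫ s in τ..b, f' s = f b - f τ :=
    integral_eq_sub_of_hasDerivAt
      (fun s hs => hderiv s (by rw [uIcc_of_le hτ.2] at hs; exact ⟨hτ.1.trans_le hs.1, hs.2⟩))
      (hint.mono_set hsub)
  have hsub' : uIcc a τ ⊆ uIcc a b := uIcc_subset_uIcc_left (mem_uIcc_of_le hτ.1.le hτ.2)
  have hsplit : f τ - (f b - ∫ s in a..b, f' s) = ∫ s in a..τ, f' s := by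
    linarith [integral_interval_sub_left hint (hint.mono_set hsub')]
  rw [hsplit]
  simpa only [Real.norm_eq_abs] using norm_integral_le_of_norm_le (f := f') hτ.1.le
    (ae_of_all _ fun s hs => hle s ⟨hs.1, hs.2.trans hτ.2⟩) (hg.mono_set hsub')

theorem exists_abs_sub_le_logWeightPrimitive {f f' : ℝ → ℝ} {C : ℝ}
    (hderiv : ∀ s ∈ Ioc (0:ℝ) 1, HasDerivAt f (f' s) s) (hf' : ContinuousOn f' (Ioc 0 1))
    (hle : ∀ s ∈ Ioc (0:ℝ) 1, |f' s| ≤ C * logWeight s) :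
    ∃ L, ∀ τ ∈ Ioc (0:ℝ) 1, |f τ - L| ≤ C * logWeightPrimitive τ := by
  obtain ⟨L, hL⟩ := exists_abs_sub_le_integral_of_abs_deriv_le hderiv hf'
    ((continuous_logWeight.intervalIntegrable 0 1).const_mul C) hle
  refine ⟨L, fun τ hτ => ?_⟩
  rw [← integral_logWeight hτ.1.le, ← intervalIntegral.integral_const_mul]
  exact hL τ hτ

theorem tendsto_of_abs_sub_le_logWeightPrimitive {f : ℝ → ℝ} {L C : ℝ}
    (h : ∀ τ ∈ Ioc (0:ℝ) 1, |f τ - L| ≤ C * logWeightPrimitive τ) :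
    Tendsto f (𝓝[>] 0) (𝓝 L) := by
  rw [tendsto_iff_norm_sub_tendsto_zero]
  refine squeeze_zero_norm' ?_ (by simpa using tendsto_logWeightPrimitive_nhdsGT_zero.const_mul C)
  filter_upwards [Ioc_mem_nhdsGT (zero_lt_one' ℝ)] with τ hτ
  simpa using h τ hτ

theorem le_mul_exp_of_le_add_mul_integral {V : ℝ → ℝ} {A B a b : ℝ} (hB : 0 ≤ B)
    (hV : ContinuousOn V (Ioc a b)) (h : ∀ τ ∈ Ioc a b, V τ ≤ A + B * ∫ s in τ..b, V s) :
    ∀ τ ∈ Ioc a b, V τ ≤ A * Real.exp (B * (b - τ)) := by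
  intro τ hτ
  have hsub : Icc τ b ⊆ Ioc a b := (Icc_subset_Ioc_iff hτ.2).2 ⟨hτ.1, le_rfl⟩
  -- `ψ' ≥ 0` is the hypothesis `h`, and `ψ b = A`
  set ψ : ℝ → ℝ := fun x => (A + B * ∫ s in x..b, V s) * Real.exp (B * (x - b))
  have hprim : ContinuousOn (fun x => ∫ s in x..b, V s) (Icc τ b) := by
    simpa [uIcc_of_le hτ.2] using continuousOn_primitive_interval_left
      (((hV.mono hsub).integrableOn_Icc).mono_set (uIcc_of_le hτ.2).subset)
  have hderiv : ∀ x ∈ Ioo τ b,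
      HasDerivAt ψ (B * Real.exp (B * (x - b)) * (A + B * (∫ s in x..b, V s) - V x)) x := by
    intro x hx
    have hxa : x ∈ Ioo a b := ⟨hτ.1.trans hx.1, hx.2⟩
    have hI : HasDerivAt (fun u => ∫ s in u..b, V s) (-V x) x :=
      integral_hasDerivAt_left ((hV.mono ((Icc_subset_Ioc_iff hx.2.le).2
          ⟨hxa.1, le_rfl⟩)).intervalIntegrable_of_Icc hx.2.le)
        ((hV.mono Ioo_subset_Ioc_self).stronglyMeasurableAtFilter isOpen_Ioo x hxa)
        ((hV.mono Ioo_subset_Ioc_self).continuousAt (isOpen_Ioo.mem_nhds hxa))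
    have hE : HasDerivAt (fun u => Real.exp (B * (u - b))) (Real.exp (B * (x - b)) * B) x := by
      simpa using ((hasDerivAt_id x).sub_const b).const_mul B |>.exp
    refine (((hI.const_mul B).const_add A).mul hE).congr_deriv ?_
    ring
  have hmono : MonotoneOn ψ (Icc τ b) := by
    refine monotoneOn_of_hasDerivWithinAt_nonneg (convex_Icc τ b)
      (f' := fun x => B * Real.exp (B * (x - b)) * (A + B * (∫ s in x..b, V s) - V x))
      ((continuousOn_const.add (continuousOn_const.mul hprim)).mul (by fun_prop))
      (fun x hx => ?_) (fun x hx => ?_) <;> rw [interior_Icc] at hx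
    · exact (hderiv x hx).hasDerivWithinAt
    · have := h x (hsub (Ioo_subset_Icc_self hx))
      have := Real.exp_pos (B * (x - b))
      apply mul_nonneg (by positivity)
      linarith
  have hψ : ψ τ ≤ A := by
    simpa [ψ] using hmono ⟨le_rfl, hτ.2⟩ ⟨hτ.2, le_rfl⟩ hτ.2
  calc V τ ≤ A + B * ∫ s in τ..b, V s := h τ hτ
    _ = ψ τ * Real.exp (B * (b - τ)) := by
      rw [mul_assoc, ← Real.exp_add, show B * (τ - b) + B * (b - τ) = 0 by ring, Real.exp_zero,
        mul_one]
    _ ≤ A * Real.exp (B * (b - τ)) := by gcongr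

theorem abs_le_mul_one_sub_log_of_abs_deriv_le {f f' : ℝ → ℝ} {M : ℝ} (hM : 0 ≤ M)
    (hderiv : ∀ s ∈ Ioc (0:ℝ) 1, HasDerivAt f (f' s) s) (hf' : ContinuousOn f' (Ioc 0 1))
    (hle : ∀ s ∈ Ioc (0:ℝ) 1, |f' s| ≤ M / s) :
    ∀ τ ∈ Ioc (0:ℝ) 1, |f τ| ≤ (|f 1| + M) * (1 - Real.log τ) := by
  intro τ hτ
  have hsub : Icc τ 1 ⊆ Ioc 0 1 := (Icc_subset_Ioc_iff hτ.2).2 ⟨hτ.1, le_rfl⟩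
  have hbound := abs_le_abs_add_integral_of_abs_deriv_le hτ.2 (fun s hs => hderiv s (hsub hs))
    (hf'.mono hsub) (g := fun s => M * s⁻¹)
    (((continuousOn_inv₀.mono fun s hs => (hsub hs).1.ne').const_smul M).intervalIntegrable_of_Icc
      hτ.2) (fun s hs => (hle s (hsub hs)).trans_eq (div_eq_mul_inv _ _))
  rw [intervalIntegral.integral_const_mul, integral_inv_of_pos hτ.1 one_pos, one_div,
    Real.log_inv] at hbound
  have := Real.log_nonpos hτ.1.le hτ.2
  nlinarith [abs_nonneg (f 1)]

/-- What the model system gives once (E) is multiplied by `τ`; `K` bounds its coefficients. -/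
structure ModelInequality (K : ℝ) (a c : ℝ → ℝ) : Prop where
  differentiableAt : ∀ s ∈ Ioc (0:ℝ) 1, DifferentiableAt ℝ a s
  differentiableAt_mul_deriv :
    ∀ s ∈ Ioc (0:ℝ) 1, DifferentiableAt ℝ (fun t => t * deriv a t) s
  continuousOn_deriv_mul_deriv : ContinuousOn (deriv fun t => t * deriv a t) (Ioc 0 1)
  hasDerivAt_constraint : ∀ s ∈ Ioc (0:ℝ) 1, HasDerivAt c (2 * s * a s) s
  abs_deriv_mul_deriv_le : ∀ s ∈ Ioc (0:ℝ) 1,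
    |deriv (fun t => t * deriv a t) s| ≤ K * s * (|s * deriv a s| + |a s| + |c s|)

/-- The weight `s` in front of `|a|` absorbs the `1 / s` in `a' = (s a') / s`. -/
noncomputable def modelEnergy (a c : ℝ → ℝ) (s : ℝ) : ℝ :=
  |s * deriv a s| + s * |a s| + |c s|

theorem modelEnergy_nonneg (a c : ℝ → ℝ) {s : ℝ} (hs : 0 ≤ s) : 0 ≤ modelEnergy a c s := by
  unfold modelEnergy
  positivity

theorem abs_mul_deriv_le_modelEnergy (a c : ℝ → ℝ) {s : ℝ} (hs : 0 ≤ s) :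
    |s * deriv a s| ≤ modelEnergy a c s := by
  unfold modelEnergy
  have := mul_nonneg hs (abs_nonneg (a s))
  linarith [abs_nonneg (c s)]

namespace ModelInequality

variable {K : ℝ} {a c : ℝ → ℝ}

theorem continuousOn (H : ModelInequality K a c) : ContinuousOn a (Ioc 0 1) :=
  fun s hs => (H.differentiableAt s hs).continuousAt.continuousWithinAt

theorem continuousOn_constraint (H : ModelInequality K a c) : ContinuousOn c (Ioc 0 1) :=
  fun s hs => (H.hasDerivAt_constraint s hs).continuousAt.continuousWithinAt

theorem continuousOn_mul_deriv (H : ModelInequality K a c) :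
    ContinuousOn (fun t => t * deriv a t) (Ioc 0 1) :=
  fun s hs => (H.differentiableAt_mul_deriv s hs).continuousAt.continuousWithinAt

theorem continuousOn_deriv (H : ModelInequality K a c) : ContinuousOn (deriv a) (Ioc 0 1) :=
  (H.continuousOn_mul_deriv.div continuousOn_id fun _ hs => hs.1.ne').congr
    fun _ hs => (mul_div_cancel_left₀ _ hs.1.ne').symm

theorem continuousOn_modelEnergy (H : ModelInequality K a c) :
    ContinuousOn (modelEnergy a c) (Ioc 0 1) :=
  (H.continuousOn_mul_deriv.abs.add (continuousOn_id.mul H.continuousOn.abs)).add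
    H.continuousOn_constraint.abs

theorem intervalIntegrable_modelEnergy (H : ModelInequality K a c) {τ : ℝ}
    (hτ : τ ∈ Ioc (0:ℝ) 1) : IntervalIntegrable (modelEnergy a c) volume τ 1 :=
  (H.continuousOn_modelEnergy.mono
    ((Icc_subset_Ioc_iff hτ.2).2 ⟨hτ.1, le_rfl⟩)).intervalIntegrable_of_Icc hτ.2

theorem abs_mul_deriv_le_add_integral (H : ModelInequality K a c) (hK : 0 ≤ K) {τ : ℝ}
    (hτ : τ ∈ Ioc (0:ℝ) 1) :
    |τ * deriv a τ| ≤ |deriv a 1| + K * ∫ s in τ..1, modelEnergy a c s := by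
  have hsub : Icc τ 1 ⊆ Ioc 0 1 := (Icc_subset_Ioc_iff hτ.2).2 ⟨hτ.1, le_rfl⟩
  rw [← intervalIntegral.integral_const_mul, ← one_mul (deriv a 1)]
  refine abs_le_abs_add_integral_of_abs_deriv_le hτ.2
    (fun s hs => (H.differentiableAt_mul_deriv s (hsub hs)).hasDerivAt)
    (H.continuousOn_deriv_mul_deriv.mono hsub) ((H.intervalIntegrable_modelEnergy hτ).const_mul K)
    fun s hs => ?_
  have hs' := hsub hs
  calc _ ≤ K * s * (|s * deriv a s| + |a s| + |c s|) := H.abs_deriv_mul_deriv_le s hs'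
    _ = K * (s * |s * deriv a s| + s * |a s| + s * |c s|) := by ring
    _ ≤ K * modelEnergy a c s := by
      refine mul_le_mul_of_nonneg_left ?_ hK
      unfold modelEnergy
      linarith [mul_le_of_le_one_left (abs_nonneg (s * deriv a s)) hs'.2,
        mul_le_of_le_one_left (abs_nonneg (c s)) hs'.2]

theorem mul_abs_le_add_integral (H : ModelInequality K a c) {τ : ℝ} (hτ : τ ∈ Ioc (0:ℝ) 1) :
    τ * |a τ| ≤ |a 1| + ∫ s in τ..1, modelEnergy a c s := by
  have hsub : Icc τ 1 ⊆ Ioc 0 1 := (Icc_subset_Ioc_iff hτ.2).2 ⟨hτ.1, le_rfl⟩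
  have ha : |a τ| ≤ |a 1| + ∫ s in τ..1, modelEnergy a c s / τ := by
    refine abs_le_abs_add_integral_of_abs_deriv_le hτ.2
      (fun s hs => (H.differentiableAt s (hsub hs)).hasDerivAt)
      (H.continuousOn_deriv.mono hsub) ((H.intervalIntegrable_modelEnergy hτ).div_const τ)
      fun s hs => ?_
    have hs' := hsub hs
    calc |deriv a s| = |s * deriv a s| / s := by
          rw [abs_mul, abs_of_pos hs'.1, mul_div_cancel_left₀ _ hs'.1.ne']
      _ ≤ modelEnergy a c s / s :=
          div_le_div_of_nonneg_right (abs_mul_deriv_le_modelEnergy a c hs'.1.le) hs'.1.le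
      _ ≤ modelEnergy a c s / τ :=
          div_le_div_of_nonneg_left (modelEnergy_nonneg a c hs'.1.le) hτ.1 hs.1
  rw [intervalIntegral.integral_div] at ha
  calc τ * |a τ| ≤ τ * (|a 1| + (∫ s in τ..1, modelEnergy a c s) / τ) := by
        gcongr
        exact hτ.1.le
    _ = τ * |a 1| + ∫ s in τ..1, modelEnergy a c s := by field_simp [hτ.1.ne']
    _ ≤ |a 1| + ∫ s in τ..1, modelEnergy a c s := by
        gcongr
        exact mul_le_of_le_one_left (abs_nonneg _) hτ.2

theorem abs_constraint_le_add_integral (H : ModelInequality K a c) {τ : ℝ}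
    (hτ : τ ∈ Ioc (0:ℝ) 1) :
    |c τ| ≤ |c 1| + 2 * ∫ s in τ..1, modelEnergy a c s := by
  have hsub : Icc τ 1 ⊆ Ioc 0 1 := (Icc_subset_Ioc_iff hτ.2).2 ⟨hτ.1, le_rfl⟩
  rw [← intervalIntegral.integral_const_mul]
  refine abs_le_abs_add_integral_of_abs_deriv_le hτ.2
    (fun s hs => H.hasDerivAt_constraint s (hsub hs))
    (((continuousOn_const.mul continuousOn_id).mul H.continuousOn).mono hsub)
    ((H.intervalIntegrable_modelEnergy hτ).const_mul 2) fun s hs => ?_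
  have hs' := hsub hs
  rw [abs_mul, abs_of_pos (by linarith [hs'.1] : (0:ℝ) < 2 * s), mul_assoc]
  refine mul_le_mul_of_nonneg_left ?_ zero_le_two
  unfold modelEnergy
  linarith [abs_nonneg (s * deriv a s), abs_nonneg (c s)]

theorem modelEnergy_le (H : ModelInequality K a c) (hK : 0 ≤ K) {τ : ℝ}
    (hτ : τ ∈ Ioc (0:ℝ) 1) :
    modelEnergy a c τ ≤
      (|deriv a 1| + |a 1| + |c 1|) + (K + 3) * ∫ s in τ..1, modelEnergy a c s := by
  have hw := H.abs_mul_deriv_le_add_integral hK hτ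
  have ha := H.mul_abs_le_add_integral hτ
  have hc := H.abs_constraint_le_add_integral hτ
  show |τ * deriv a τ| + τ * |a τ| + |c τ| ≤ _
  linarith

theorem exists_modelEnergy_le (H : ModelInequality K a c) (hK : 0 ≤ K) :
    ∃ M, ∀ s ∈ Ioc (0:ℝ) 1, modelEnergy a c s ≤ M := by
  refine ⟨(|deriv a 1| + |a 1| + |c 1|) * Real.exp (K + 3), fun s hs => ?_⟩
  calc modelEnergy a c s ≤ (|deriv a 1| + |a 1| + |c 1|) * Real.exp ((K + 3) * (1 - s)) :=
      le_mul_exp_of_le_add_mul_integral (by linarith) H.continuousOn_modelEnergy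
        (fun τ hτ => H.modelEnergy_le hK hτ) s hs
    _ ≤ (|deriv a 1| + |a 1| + |c 1|) * Real.exp (K + 3) := by
      gcongr
      nlinarith [hs.1]

theorem exists_abs_le_mul_one_sub_log (H : ModelInequality K a c) (hK : 0 ≤ K) :
    ∃ M, 0 ≤ M ∧ ∀ s ∈ Ioc (0:ℝ) 1,
      |s * deriv a s| ≤ M ∧ |a s| ≤ M * (1 - Real.log s) ∧ |c s| ≤ M := by
  obtain ⟨M, hM⟩ := H.exists_modelEnergy_le hK
  have hM0 : 0 ≤ M := (modelEnergy_nonneg a c zero_le_one).trans (hM 1 ⟨one_pos, le_rfl⟩)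
  have hw : ∀ s ∈ Ioc (0:ℝ) 1, |s * deriv a s| ≤ M := fun s hs =>
    (abs_mul_deriv_le_modelEnergy a c hs.1.le).trans (hM s hs)
  have hc : ∀ s ∈ Ioc (0:ℝ) 1, |c s| ≤ M := fun s hs =>
    (le_add_of_nonneg_left (by have := hs.1.le; positivity)).trans (hM s hs)
  have ha := abs_le_mul_one_sub_log_of_abs_deriv_le hM0
    (fun s hs => (H.differentiableAt s hs).hasDerivAt) H.continuousOn_deriv fun s hs => by
      rw [le_div_iff₀ hs.1]
      simpa [abs_mul, abs_of_pos hs.1, mul_comm] using hw s hs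
  have hM' : M ≤ |a 1| + M := le_add_of_nonneg_left (abs_nonneg _)
  exact ⟨|a 1| + M, by positivity, fun s hs =>
    ⟨(hw s hs).trans hM', ha s hs, (hc s hs).trans hM'⟩⟩

theorem exists_abs_constraint_sub_le (H : ModelInequality K a c) (hK : 0 ≤ K) :
    ∃ C c₀, ∀ τ ∈ Ioc (0:ℝ) 1, |c τ - c₀| ≤ C * logWeightPrimitive τ := by
  obtain ⟨M, -, hM⟩ := H.exists_abs_le_mul_one_sub_log hK
  obtain ⟨c₀, hc₀⟩ := exists_abs_sub_le_logWeightPrimitive (C := 2 * M) H.hasDerivAt_constraint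
    ((continuousOn_const.mul continuousOn_id).mul H.continuousOn) fun s hs => by
      rw [abs_mul, abs_of_pos (by linarith [hs.1] : (0:ℝ) < 2 * s), logWeight]
      nlinarith [(hM s hs).2.1, hs.1]
  exact ⟨2 * M, c₀, hc₀⟩

theorem exists_abs_mul_deriv_sub_le (H : ModelInequality K a c) (hK : 0 ≤ K) :
    ∃ C O, 0 ≤ C ∧ ∀ τ ∈ Ioc (0:ℝ) 1,
      |τ * deriv a τ - O| ≤ C * logWeightPrimitive τ := by
  obtain ⟨M, hM0, hM⟩ := H.exists_abs_le_mul_one_sub_log hK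
  obtain ⟨O, hO⟩ := exists_abs_sub_le_logWeightPrimitive (C := 3 * K * M)
    (fun s hs => (H.differentiableAt_mul_deriv s hs).hasDerivAt)
    H.continuousOn_deriv_mul_deriv fun s hs => by
      obtain ⟨hw, ha, hc⟩ := hM s hs
      have hM1 : M ≤ M * (1 - Real.log s) :=
        le_mul_of_one_le_right hM0 (by linarith [Real.log_nonpos hs.1.le hs.2])
      calc _ ≤ K * s * (|s * deriv a s| + |a s| + |c s|) := H.abs_deriv_mul_deriv_le s hs
        _ ≤ K * s * (3 * (M * (1 - Real.log s))) := by
          refine mul_le_mul_of_nonneg_left ?_ (mul_nonneg hK hs.1.le)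
          linarith
        _ = 3 * K * M * logWeight s := by rw [logWeight]; ring
  exact ⟨_, O, by positivity, hO⟩

theorem exists_tendsto_and_asymptotics (H : ModelInequality K a c) (hK : 0 ≤ K) :
    ∃ c₀ : ℝ, Tendsto c (nhdsWithin 0 (Ioi 0)) (nhds c₀) ∧
      ∃ O h K : ℝ, 0 ≤ K ∧ ∀ τ ∈ Ioc (0:ℝ) 1,
        |a τ - O * Real.log τ - h| ≤ K * τ ^ 2 * (1 + Real.log τ ^ 2) ∧
        |deriv a τ - O / τ| ≤ K * τ * (1 + Real.log τ ^ 2) := by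
  obtain ⟨_, c₀, hc₀⟩ := H.exists_abs_constraint_sub_le hK
  obtain ⟨C, O, hC, hO⟩ := H.exists_abs_mul_deriv_sub_le hK
  have hr : ∀ s ∈ Ioc (0:ℝ) 1, |deriv a s - O / s| ≤ C * logWeightPrimitive s / s :=
    fun s hs => by
      rw [show deriv a s - O / s = (s * deriv a s - O) / s by field_simp [hs.1.ne'], abs_div,
        abs_of_pos hs.1]
      exact div_le_div_of_nonneg_right (hO s hs) hs.1.le
  obtain ⟨h, hh⟩ := exists_abs_sub_le_logWeightPrimitive (C := C)
    (f := fun s => a s - O * Real.log s) (f' := fun s => deriv a s - O / s)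
    (fun s hs => ((H.differentiableAt s hs).hasDerivAt.sub
      ((Real.hasDerivAt_log hs.1.ne').const_mul O)).congr_deriv (by ring))
    (H.continuousOn_deriv.sub (continuousOn_const.div continuousOn_id fun _ hs => hs.1.ne'))
    fun s hs => (hr s hs).trans <| by
      rw [div_le_iff₀ hs.1, mul_assoc, mul_comm (logWeight s)]
      exact mul_le_mul_of_nonneg_left (logWeightPrimitive_le_mul_logWeight hs.1.le hs.2) hC
  refine ⟨c₀, tendsto_of_abs_sub_le_logWeightPrimitive hc₀, O, h, 5 / 4 * C, by positivity,
    fun τ hτ => ⟨?_, ?_⟩⟩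
  · calc |a τ - O * Real.log τ - h| ≤ C * logWeightPrimitive τ := hh τ hτ
      _ ≤ C * (5 / 4 * τ ^ 2 * (1 + Real.log τ ^ 2)) :=
        mul_le_mul_of_nonneg_left (logWeightPrimitive_le τ) hC
      _ = _ := by ring
  · calc |deriv a τ - O / τ| ≤ C * logWeightPrimitive τ / τ := hr τ hτ
      _ ≤ C * (5 / 4 * τ ^ 2 * (1 + Real.log τ ^ 2)) / τ :=
        div_le_div_of_nonneg_right (mul_le_mul_of_nonneg_left (logWeightPrimitive_le τ) hC)
          hτ.1.le
      _ = _ := by field_simp [hτ.1.ne']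

end ModelInequality

theorem abs_modelPotential_le {q' F lam f s : ℝ} (hf : |f| ≤ F) (hs0 : 0 ≤ s) (hs1 : s ≤ 1) :
    |f * s ^ 2 - 4 * q' - 4 * lam ^ 2 * ((s ^ 2 + 1) ^ 2)⁻¹| ≤ F + 4 * |q'| + 4 * lam ^ 2 := by
  have hf2 : |f * s ^ 2| ≤ F := by
    rw [abs_mul, abs_pow, abs_of_nonneg hs0]
    exact (mul_le_of_le_one_right (abs_nonneg _) (pow_le_one₀ hs0 hs1)).trans hf
  have hlam : |4 * lam ^ 2 * ((s ^ 2 + 1) ^ 2)⁻¹| ≤ 4 * lam ^ 2 := by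
    rw [abs_of_nonneg (by positivity)]
    exact mul_le_of_le_one_right (by positivity) (inv_le_one_of_one_le₀ (by nlinarith))
  calc _ ≤ |f * s ^ 2 - 4 * q'| + |4 * lam ^ 2 * ((s ^ 2 + 1) ^ 2)⁻¹| := abs_sub _ _
    _ ≤ |f * s ^ 2| + |4 * q'| + |4 * lam ^ 2 * ((s ^ 2 + 1) ^ 2)⁻¹| := by
      gcongr
      exact abs_sub _ _
    _ ≤ F + 4 * |q'| + 4 * lam ^ 2 := by
      rw [abs_mul 4 q', abs_of_pos (by norm_num : (0:ℝ) < 4)]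
      linarith

namespace SolvesModelSystem

variable {q' lam : ℝ} {f₁ f₂ f₃ a c : ℝ → ℝ}

theorem hasDerivAt_mul_deriv (hsol : SolvesModelSystem q' f₁ f₂ f₃ lam a c (Ioc 0 1)) {s : ℝ}
    (hs : s ∈ Ioc (0:ℝ) 1) :
    HasDerivAt (fun t => t * deriv a t) (deriv a s + s * deriv (deriv a) s) s :=
  ((hasDerivAt_id' s).mul (hsol s hs).2.1.hasDerivAt).congr_deriv (by rw [one_mul])

theorem deriv_add_mul_deriv_deriv (hsol : SolvesModelSystem q' f₁ f₂ f₃ lam a c (Ioc 0 1))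
    {s : ℝ} (hs : s ∈ Ioc (0:ℝ) 1) :
    deriv a s + s * deriv (deriv a) s =
      s * (f₁ s * (s * deriv a s) +
        (f₂ s * s ^ 2 - 4 * q' - 4 * lam ^ 2 * ((s ^ 2 + 1) ^ 2)⁻¹) * a s + f₃ s * c s) := by
  linear_combination s * (hsol s hs).2.2.2.1 - deriv a s * mul_inv_cancel₀ hs.1.ne'

theorem modelInequality {F : ℝ} (hsol : SolvesModelSystem q' f₁ f₂ f₃ lam a c (Ioc 0 1))
    (ha : ContinuousOn (deriv (deriv a)) (Ioc 0 1))
    (hf₁ : ∀ s ∈ Ioc (0:ℝ) 1, |f₁ s| ≤ F) (hf₂ : ∀ s ∈ Ioc (0:ℝ) 1, |f₂ s| ≤ F)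
    (hf₃ : ∀ s ∈ Ioc (0:ℝ) 1, |f₃ s| ≤ F) :
    ModelInequality (F + 4 * |q'| + 4 * lam ^ 2) a c := by
  refine ⟨fun s hs => (hsol s hs).1, fun s hs => (hsol.hasDerivAt_mul_deriv hs).differentiableAt,
    ?_, fun s hs => (hsol s hs).2.2.2.2 ▸ (hsol s hs).2.2.1.hasDerivAt, fun s hs => ?_⟩
  · have hda : ContinuousOn (deriv a) (Ioc 0 1) :=
      fun s hs => (hsol s hs).2.1.continuousAt.continuousWithinAt
    exact (hda.add (continuousOn_id.mul ha)).congr fun s hs => (hsol.hasDerivAt_mul_deriv hs).deriv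
  have hFK : F ≤ F + 4 * |q'| + 4 * lam ^ 2 := by linarith [abs_nonneg q', sq_nonneg lam]
  have h₁ := mul_le_mul_of_nonneg_right ((hf₁ s hs).trans hFK) (abs_nonneg (s * deriv a s))
  have h₂ := mul_le_mul_of_nonneg_right (abs_modelPotential_le (q' := q') (lam := lam) (hf₂ s hs)
    hs.1.le hs.2) (abs_nonneg (a s))
  have h₃ := mul_le_mul_of_nonneg_right ((hf₃ s hs).trans hFK) (abs_nonneg (c s))
  have htri := abs_add_three (f₁ s * (s * deriv a s))
    ((f₂ s * s ^ 2 - 4 * q' - 4 * lam ^ 2 * ((s ^ 2 + 1) ^ 2)⁻¹) * a s) (f₃ s * c s)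
  rw [abs_mul (f₁ s), abs_mul _ (a s), abs_mul (f₃ s)] at htri
  rw [(hsol.hasDerivAt_mul_deriv hs).deriv, hsol.deriv_add_mul_deriv_deriv hs, abs_mul,
    abs_of_pos hs.1, mul_comm _ s, mul_assoc s]
  exact mul_le_mul_of_nonneg_left (by linarith) hs.1.le

end SolvesModelSystem

theorem asymptotic_completeness_model_general (q' F : ℝ) (hF : 0 ≤ F)
    (f₁ f₂ f₃ : ℝ → ℝ)
    (hf₁ : ∀ τ ≥ (0:ℝ), |f₁ τ| ≤ F) (hf₂ : ∀ τ ≥ (0:ℝ), |f₂ τ| ≤ F)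
    (hf₃ : ∀ τ ≥ (0:ℝ), |f₃ τ| ≤ F)
    (lam : ℝ)
    (a c : ℝ → ℝ)
    (hsol : SolvesModelSystem q' f₁ f₂ f₃ lam a c (Ioc 0 1))
    (ha : ContinuousOn (deriv (deriv a)) (Ioc 0 1)) :
    ∃ c₀ : ℝ, Tendsto c (nhdsWithin 0 (Ioi 0)) (nhds c₀) ∧
      ∃ O h K : ℝ, 0 ≤ K ∧ ∀ τ ∈ Ioc (0:ℝ) 1,
        |a τ - O * Real.log τ - h| ≤ K * τ ^ 2 * (1 + Real.log τ ^ 2) ∧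
        |deriv a τ - O / τ| ≤ K * τ * (1 + Real.log τ ^ 2) :=
  (hsol.modelInequality ha (fun s hs => hf₁ s hs.1.le) (fun s hs => hf₂ s hs.1.le)
    (fun s hs => hf₃ s hs.1.le)).exists_tendsto_and_asymptotics (by positivity)

/-- Asymptotic completeness for the model system (single-mode version of
Proposition 3.13 of the paper). -/
theorem asymptotic_completeness_model (q' F : ℝ) (hq : 1 ≤ q') (hF : 0 ≤ F)
    (f₁ f₂ f₃ : ℝ → ℝ)
    (hf₁c : ContinuousOn f₁ (Ici 0)) (hf₂c : ContinuousOn f₂ (Ici 0))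
    (hf₃c : ContinuousOn f₃ (Ici 0))
    (hf₁ : ∀ τ ≥ (0:ℝ), |f₁ τ| ≤ F) (hf₂ : ∀ τ ≥ (0:ℝ), |f₂ τ| ≤ F)
    (hf₃ : ∀ τ ≥ (0:ℝ), |f₃ τ| ≤ F)
    (lam : ℝ) (hlam : 0 ≤ lam)
    (a c : ℝ → ℝ)
    (hsol : SolvesModelSystem q' f₁ f₂ f₃ lam a c (Ioc 0 1))
    (ha : ContinuousOn (deriv (deriv a)) (Ioc 0 1))
    (hc : ContinuousOn (deriv c) (Ioc 0 1)) :
    ∃ c₀ : ℝ, Tendsto c (nhdsWithin 0 (Ioi 0)) (nhds c₀) ∧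
      ∃ O h K : ℝ, 0 ≤ K ∧ ∀ τ ∈ Ioc (0:ℝ) 1,
        |a τ - O * Real.log τ - h| ≤ K * τ ^ 2 * (1 + Real.log τ ^ 2) ∧
        |deriv a τ - O / τ| ≤ K * τ * (1 + Real.log τ ^ 2) :=
  asymptotic_completeness_model_general q' F hF f₁ f₂ f₃ hf₁ hf₂ hf₃ lam a c hsol ha
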